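/- arXiv:2401.04594 — 2 statements merged into one kernel-verified Lean document; each statement's English description precedes it below -/
import Mathlib

section
/- Relative completeness of Outcome Logic: for every program C and all outcome assertions φ, ψ, if the triple ⟨φ⟩C⟨ψ⟩ is semantically valid (⊨ ⟨φ⟩C⟨ψ⟩), then it is derivable in the Outcome Logic proof system (Ω ⊢ ⟨φ⟩C⟨ψ⟩). -/
/-!
Every valid triple is a consequence of the most precise ones: for each program `C` and outcome
`m`, the triple `⟨{m}⟩ C ⟨{⟦C⟧† m}⟩` is derivable, by induction on `C`. For `assume e` the
outcome `m` is split into the point masses `m σ · η σ` (Choice and Scale), on each of which `e`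
is constant. For `iter C e e'` the invariants are the singletons of the outcomes after `n`
unrollings of `assume e; C`; their exits through `assume e'` are the parts of the loop's outcome
that leave after exactly `n` iterations, and these sum to the whole. A valid `⟨φ⟩ C ⟨ψ⟩` then
follows by Exists over `m ∈ φ` and Consequence.
-/

open scoped Classical

universe u v

/-- A semiring that is simultaneously a complete lattice with bottom `0`, whose order
coincides with the natural (additive) order, and in which addition and multiplication
are Scott-continuous. -/
class OLSemiring (U : Type u) extends Semiring U, CompleteLattice U where
  bot_eq_zero : (⊥ : U) = 0
  le_iff_exists_add : ∀ a b : U, a ≤ b ↔ ∃ c, a + c = b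
  add_scott : ∀ (D : Set U), D.Nonempty → DirectedOn (· ≤ ·) D → ∀ y : U,
    sSup ((fun x => x + y) '' D) = sSup D + y
  mul_scott_right : ∀ (D : Set U), D.Nonempty → DirectedOn (· ≤ ·) D → ∀ y : U,
    sSup ((fun x => x * y) '' D) = sSup D * y
  mul_scott_left : ∀ (D : Set U), D.Nonempty → DirectedOn (· ≤ ·) D → ∀ y : U,
    sSup ((fun x => y * x) '' D) = y * sSup D

variable {U : Type u} [OLSemiring U]

/-- Infinite sum: supremum over finite subfamilies of finite sums. -/
noncomputable def wsum {I : Type v} (f : I → U) : U :=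
  ⨆ J : Finset I, ∑ i ∈ J, f i

/-- The unit of the weighting monad. -/
noncomputable def eta {X : Type u} (x : X) : X → U :=
  fun y => if y = x then 1 else 0

/-- Kleisli extension: `kext f m y = ∑_{x ∈ supp m} m x * f x y`. -/
noncomputable def kext {X Y : Type u} (f : X → Y → U) (m : X → U) : Y → U :=
  fun y => wsum (fun x : Function.support m => m x.1 * f x.1 y)

/-- Syntax of tests over primitive tests indexed by `TI`. -/
inductive TestExpr (TI : Type u) : Type u where
  | prim (t : TI)
  | tt
  | ff
  | and (b₁ b₂ : TestExpr TI)
  | or (b₁ b₂ : TestExpr TI)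
  | not (b : TestExpr TI)

/-- The set of states at which a test is true. -/
def testSet {St TI : Type u} (tsem : TI → Set St) : TestExpr TI → Set St
  | .prim t => tsem t
  | .tt => Set.univ
  | .ff => ∅
  | .and b₁ b₂ => testSet tsem b₁ ∩ testSet tsem b₂
  | .or b₁ b₂ => testSet tsem b₁ ∪ testSet tsem b₂
  | .not b => (testSet tsem b)ᶜ

/-- Expressions: a test or a weight. -/
inductive Expr (U : Type u) (TI : Type u) : Type u where
  | test (b : TestExpr TI)
  | wt (u : U)

/-- Evaluation of expressions into weights. -/
noncomputable def eeval {St TI : Type u} (tsem : TI → Set St) : Expr U TI → St → U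
  | .test b => fun σ => if σ ∈ testSet tsem b then 1 else 0
  | .wt u => fun _ => u

/-- Programs. -/
inductive Prog (U St TI Act : Type u) : Type u where
  | skip
  | seq (C₁ C₂ : Prog U St TI Act)
  | choice (C₁ C₂ : Prog U St TI Act)
  | assume (e : Expr U TI)
  | iter (C : Prog U St TI Act) (e e' : Expr U TI)
  | act (a : Act)

/-- The characteristic function of iteration. -/
noncomputable def Phi {St : Type u} (w w' : St → U) (g : St → St → U)
    (f : St → St → U) : St → St → U :=
  fun σ τ => w σ * kext f (g σ) τ + w' σ * eta σ τ

/-- Denotational semantics of programs. -/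
noncomputable def sem {St TI Act : Type u} (tsem : TI → Set St)
    (asem : Act → St → St → U) : Prog U St TI Act → St → St → U
  | .skip => fun σ => eta σ
  | .seq C₁ C₂ => fun σ => kext (sem tsem asem C₂) (sem tsem asem C₁ σ)
  | .choice C₁ C₂ => fun σ τ => sem tsem asem C₁ σ τ + sem tsem asem C₂ σ τ
  | .assume e => fun σ τ => eeval tsem e σ * eta σ τ
  | .iter C e e' =>
      ⨆ n : ℕ, (Phi (eeval tsem e) (eeval tsem e') (sem tsem asem C))^[n] (fun _ _ => 0)
  | .act a => asem a

/-- Outcome assertions. -/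
abbrev OA (U : Type u) (St : Type u) := Set (St → U)

/-- Binary outcome conjunction. -/
def oplus {St : Type u} (φ ψ : OA U St) : OA U St :=
  { m | ∃ m₁ ∈ φ, ∃ m₂ ∈ ψ, m = fun σ => m₁ σ + m₂ σ }

/-- Indexed outcome conjunction. -/
noncomputable def bigOplus {St T : Type u} (φ : T → OA U St) : OA U St :=
  { m | ∃ f : T → St → U, (∀ t, f t ∈ φ t) ∧ m = fun σ => wsum (fun t => f t σ) }

/-- Right scaling of an assertion by a weight. -/
def odotR {St : Type u} (φ : OA U St) (u : U) : OA U St :=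
  { m' | ∃ m ∈ φ, m' = fun σ => m σ * u }

/-- Left scaling of an assertion by a weight. -/
def odotL {St : Type u} (u : U) (φ : OA U St) : OA U St :=
  { m' | ∃ m ∈ φ, m' = fun σ => u * m σ }

/-- `φ ⊨ e = u` : the expression `e` evaluates to `u` on the support of every `m ∈ φ`. -/
def entailsEq {St TI : Type u} (tsem : TI → Set St) (φ : OA U St)
    (e : Expr U TI) (u : U) : Prop :=
  ∀ m ∈ φ, ∀ σ, m σ ≠ 0 → eeval tsem e σ = u

/-- Semantic validity of an outcome triple. -/
def valid {St TI Act : Type u} (tsem : TI → Set St) (asem : Act → St → St → U)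
    (φ : OA U St) (C : Prog U St TI Act) (ψ : OA U St) : Prop :=
  ∀ m ∈ φ, kext (sem tsem asem C) m ∈ ψ

/-- The family `ψ` of assertions converges to `ψlim`. -/
def convergesTo {St : Type u} (ψ : ℕ → OA U St) (ψlim : OA U St) : Prop :=
  ∀ ms : ℕ → St → U, (∀ n, ms n ∈ ψ n) → (fun σ => wsum (fun n => ms n σ)) ∈ ψlim

/-- The Outcome Logic proof system (with oracle axioms for valid atomic triples). -/
inductive Deriv {St TI Act : Type u} (tsem : TI → Set St) (asem : Act → St → St → U) :
    OA U St → Prog U St TI Act → OA U St → Prop where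
  | atom {φ ψ} (a : Act) :
      valid tsem asem φ (.act a) ψ → Deriv tsem asem φ (.act a) ψ
  | skip (φ) : Deriv tsem asem φ .skip φ
  | seq {φ ϑ ψ C₁ C₂} :
      Deriv tsem asem φ C₁ ϑ → Deriv tsem asem ϑ C₂ ψ →
      Deriv tsem asem φ (.seq C₁ C₂) ψ
  | plus {φ ψ₁ ψ₂ C₁ C₂} :
      Deriv tsem asem φ C₁ ψ₁ → Deriv tsem asem φ C₂ ψ₂ →
      Deriv tsem asem φ (.choice C₁ C₂) (oplus ψ₁ ψ₂)
  | assume {φ e u} :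
      entailsEq tsem φ e u → Deriv tsem asem φ (.assume e) (odotR φ u)
  | iter {C e e'} (φn ψn : ℕ → OA U St) (ψlim : OA U St) :
      convergesTo ψn ψlim →
      (∀ n, Deriv tsem asem (φn n) (.seq (.assume e) C) (φn (n + 1))) →
      (∀ n, Deriv tsem asem (φn n) (.assume e') (ψn n)) →
      Deriv tsem asem (φn 0) (.iter C e e') ψlim
  | false (C φ) : Deriv tsem asem ∅ C φ
  | true (C φ) : Deriv tsem asem φ C Set.univ
  | scale {φ ψ C} (u : U) :
      Deriv tsem asem φ C ψ → Deriv tsem asem (odotL u φ) C (odotL u ψ)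
  | disj {φ₁ φ₂ ψ₁ ψ₂ C} :
      Deriv tsem asem φ₁ C ψ₁ → Deriv tsem asem φ₂ C ψ₂ →
      Deriv tsem asem (φ₁ ∪ φ₂) C (ψ₁ ∪ ψ₂)
  | conj {φ₁ φ₂ ψ₁ ψ₂ C} :
      Deriv tsem asem φ₁ C ψ₁ → Deriv tsem asem φ₂ C ψ₂ →
      Deriv tsem asem (φ₁ ∩ φ₂) C (ψ₁ ∩ ψ₂)
  | choice {T : Type u} {C} (φ φ' : T → OA U St) :
      (∀ t, Deriv tsem asem (φ t) C (φ' t)) →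
      Deriv tsem asem (bigOplus φ) C (bigOplus φ')
  | exists_ {T : Type u} {C} (φ φ' : T → OA U St) :
      (∀ t, Deriv tsem asem (φ t) C (φ' t)) →
      Deriv tsem asem (⋃ t, φ t) C (⋃ t, φ' t)
  | conseq {φ φ' ψ ψ' C} :
      φ' ⊆ φ → Deriv tsem asem φ C ψ → ψ ⊆ ψ' →
      Deriv tsem asem φ' C ψ'

section WeightedSums

instance : IsOrderedAddMonoid U where
  add_le_add_left a b hab c := by
    obtain ⟨d, rfl⟩ := (OLSemiring.le_iff_exists_add a b).1 hab
    exact (OLSemiring.le_iff_exists_add _ _).2 ⟨d, add_right_comm _ _ _⟩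

instance : CanonicallyOrderedAdd U where
  exists_add_of_le h := ((OLSemiring.le_iff_exists_add _ _).1 h).imp fun _ h => h.symm
  le_self_add _ b := (OLSemiring.le_iff_exists_add _ _).2 ⟨b, rfl⟩
  le_add_self _ b := (OLSemiring.le_iff_exists_add _ _).2 ⟨b, add_comm _ _⟩

variable {I J : Type*}

theorem sum_le_wsum (f : I → U) (s : Finset I) : ∑ i ∈ s, f i ≤ wsum f :=
  le_iSup (fun s : Finset I => ∑ i ∈ s, f i) s

theorem wsum_le {f : I → U} {c : U} (h : ∀ s : Finset I, ∑ i ∈ s, f i ≤ c) : wsum f ≤ c :=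
  iSup_le h

theorem wsum_mono {f g : I → U} (h : ∀ i, f i ≤ g i) : wsum f ≤ wsum g :=
  wsum_le fun s => (Finset.sum_le_sum fun i _ => h i).trans (sum_le_wsum g s)

theorem wsum_zero : wsum (fun _ : I => (0 : U)) = 0 :=
  le_antisymm (wsum_le fun s => by simp) zero_le

/-- The partial sums form a directed family, so a Scott-continuous map commutes with `wsum`. -/
theorem map_wsum_of_scott (f : I → U) (op : U → U)
    (hop : ∀ D : Set U, D.Nonempty → DirectedOn (· ≤ ·) D → sSup (op '' D) = op (sSup D)) :
    op (wsum f) = ⨆ s : Finset I, op (∑ i ∈ s, f i) := by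
  have hdir : DirectedOn (· ≤ ·) (Set.range fun s : Finset I => ∑ i ∈ s, f i) :=
    directedOn_range.2 (Finset.sum_mono_set f).directed_le
  rw [wsum, iSup, ← hop _ (Set.range_nonempty _) hdir, ← Set.range_comp, iSup]
  rfl

theorem mul_wsum (u : U) (f : I → U) : u * wsum f = wsum fun i => u * f i := by
  rw [map_wsum_of_scott f _ fun D hne hdir => OLSemiring.mul_scott_left D hne hdir u]
  simp only [Finset.mul_sum, wsum]

theorem wsum_mul (f : I → U) (u : U) : wsum f * u = wsum fun i => f i * u := by
  rw [map_wsum_of_scott f (· * u) fun D hne hdir => OLSemiring.mul_scott_right D hne hdir u]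
  simp only [Finset.sum_mul, wsum]

theorem wsum_add_wsum (f g : I → U) : wsum f + wsum g = wsum fun i => f i + g i := by
  have add_scott (x : U) (h : I → U) : wsum h + x = ⨆ s : Finset I, (∑ i ∈ s, h i + x) :=
    map_wsum_of_scott h (· + x) fun D hne hdir => OLSemiring.add_scott D hne hdir x
  refine le_antisymm ?_ (wsum_le fun s => ?_)
  · rw [add_scott]
    refine iSup_le fun s => ?_
    rw [add_comm, add_scott]
    refine iSup_le fun t => ?_
    calc ∑ i ∈ t, g i + ∑ i ∈ s, f i
        ≤ ∑ i ∈ s ∪ t, f i + ∑ i ∈ s ∪ t, g i := by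
          rw [add_comm]
          exact add_le_add (Finset.sum_le_sum_of_subset Finset.subset_union_left)
            (Finset.sum_le_sum_of_subset Finset.subset_union_right)
      _ = ∑ i ∈ s ∪ t, (f i + g i) := Finset.sum_add_distrib.symm
      _ ≤ _ := sum_le_wsum _ _
  · rw [Finset.sum_add_distrib]
    exact add_le_add (sum_le_wsum f s) (sum_le_wsum g s)

theorem wsum_finset_sum {κ : Type*} (s : Finset κ) (f : κ → I → U) :
    (wsum fun i => ∑ k ∈ s, f k i) = ∑ k ∈ s, wsum (f k) := by
  induction s using Finset.cons_induction with
  | empty => simpa using wsum_zero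
  | cons a s ha ih => simp only [Finset.sum_cons, ← ih, wsum_add_wsum]

theorem wsum_comm_le (f : I → J → U) :
    (wsum fun i => wsum (f i)) ≤ wsum fun j => wsum fun i => f i j :=
  wsum_le fun s => by
    rw [← wsum_finset_sum]
    exact wsum_mono fun j => sum_le_wsum (fun i => f i j) s

theorem wsum_comm (f : I → J → U) :
    (wsum fun i => wsum (f i)) = wsum fun j => wsum fun i => f i j :=
  le_antisymm (wsum_comm_le f) (wsum_comm_le _)

theorem wsum_comp_injective {K : Type*} {e : I → K} (he : Function.Injective e) (f : K → U)
    (hf : ∀ k ∉ Set.range e, f k = 0) : (wsum fun i => f (e i)) = wsum f := by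
  refine le_antisymm (wsum_le fun s => ?_) (wsum_le fun t => ?_)
  · simpa using sum_le_wsum f (s.map ⟨e, he⟩)
  · rw [← Finset.sum_preimage e t he.injOn f fun k _ hk => hf k hk]
    exact sum_le_wsum _ _

theorem wsum_eq_single {f : I → U} (i₀ : I) (h : ∀ i, i ≠ i₀ → f i = 0) : wsum f = f i₀ := by
  refine le_antisymm (wsum_le fun s => ?_) (by simpa using sum_le_wsum f {i₀})
  by_cases hi₀ : i₀ ∈ s
  · rw [Finset.sum_eq_single_of_mem i₀ hi₀ fun i _ => h i]
  · rw [Finset.sum_eq_zero fun i hi => h i (ne_of_mem_of_not_mem hi hi₀)]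
    exact zero_le

theorem iSup_sum_range_eq_wsum (f : ℕ → U) : (⨆ n, ∑ k ∈ Finset.range n, f k) = wsum f := by
  refine le_antisymm (iSup_le fun n => sum_le_wsum f _) (wsum_le fun s => ?_)
  have hs : s ⊆ Finset.range (s.sup id + 1) := fun k hk =>
    Finset.mem_range.2 (Nat.lt_succ_of_le (Finset.le_sup (f := id) hk))
  exact (Finset.sum_le_sum_of_subset hs).trans (le_iSup (fun n => ∑ k ∈ Finset.range n, f k) _)

end WeightedSums

section KleisliExtension

variable {X Y Z : Type u}

theorem kext_eq_wsum (f : X → Y → U) (m : X → U) (y : Y) :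
    kext f m y = wsum fun x => m x * f x y :=
  wsum_comp_injective Subtype.val_injective (fun x => m x * f x y) fun x hx => by
    rw [Function.notMem_support.1 fun h => hx ⟨⟨x, h⟩, rfl⟩, zero_mul]

theorem eq_of_eta_ne_zero {x y : X} (h : (eta x y : U) ≠ 0) : y = x := by
  by_contra hne
  exact h (if_neg hne)

theorem eta_mul_comm (x y : X) (u : U) : eta x y * u = u * eta x y := by
  unfold eta
  split_ifs <;> simp

theorem kext_eta_apply (f : X → Y → U) (x : X) : kext f (eta x) = f x := by
  funext y
  rw [kext_eq_wsum, wsum_eq_single x fun x' hx' => by simp [eta, hx']]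
  simp [eta]

theorem kext_eta (m : X → U) : kext (eta (U := U)) m = m := by
  funext y
  rw [kext_eq_wsum, wsum_eq_single y fun x hx => by simp [eta, Ne.symm hx]]
  simp [eta]

theorem kext_kext (g : Y → Z → U) (f : X → Y → U) (m : X → U) :
    kext g (kext f m) = kext (fun x => kext g (f x)) m := by
  funext z
  calc kext g (kext f m) z
      = wsum fun y => wsum fun x => m x * f x y * g y z := by
        simp only [kext_eq_wsum, wsum_mul]
    _ = wsum fun x => wsum fun y => m x * (f x y * g y z) := by
        simp only [mul_assoc]
        exact wsum_comm _
    _ = kext (fun x => kext g (f x)) m z := by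
        simp only [kext_eq_wsum, mul_wsum]

theorem kext_add_kernel (f₁ f₂ : X → Y → U) (m : X → U) :
    kext (fun x y => f₁ x y + f₂ x y) m = fun y => kext f₁ m y + kext f₂ m y := by
  funext y
  simp only [kext_eq_wsum, wsum_add_wsum, mul_add]

theorem kext_finset_sum_kernel {κ : Type*} (s : Finset κ) (f : κ → X → Y → U) (m : X → U) :
    kext (fun x y => ∑ k ∈ s, f k x y) m = fun y => ∑ k ∈ s, kext (f k) m y := by
  funext y
  simp only [kext_eq_wsum, Finset.mul_sum, wsum_finset_sum]

theorem kext_wsum_kernel (f : ℕ → X → Y → U) (m : X → U) :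
    kext (fun x y => wsum fun k => f k x y) m = fun y => wsum fun k => kext (f k) m y := by
  funext y
  simp only [kext_eq_wsum, mul_wsum]
  exact wsum_comm _

theorem kext_mul_left (f : X → Y → U) (u : U) (m : X → U) :
    kext f (fun x => u * m x) = fun y => u * kext f m y := by
  funext y
  simp only [kext_eq_wsum, mul_wsum, mul_assoc]

end KleisliExtension

section Iteration

variable {St : Type u} (w w' : St → U) (g : St → St → U)

noncomputable def exitAfter : ℕ → St → St → U
  | 0 => fun σ τ => w' σ * eta σ τ
  | k + 1 => fun σ τ => w σ * kext (exitAfter k) (g σ) τ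

theorem iterate_Phi_eq_sum (n : ℕ) :
    (Phi w w' g)^[n] (fun _ _ => 0) = fun σ τ => ∑ k ∈ Finset.range n, exitAfter w w' g k σ τ := by
  induction n with
  | zero => simp
  | succ n ih =>
    funext σ τ
    rw [Function.iterate_succ_apply', ih, Finset.sum_range_succ']
    simp only [Phi, kext_finset_sum_kernel, Finset.mul_sum]
    rfl

theorem iSup_iterate_Phi (σ τ : St) :
    (⨆ n, (Phi w w' g)^[n] (fun _ _ => 0)) σ τ = wsum fun k => exitAfter w w' g k σ τ := by
  simp only [iSup_apply, iterate_Phi_eq_sum, iSup_sum_range_eq_wsum]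

theorem exitAfter_succ (k : ℕ) (σ : St) :
    exitAfter w w' g (k + 1) σ = kext (exitAfter w w' g k) fun τ => w σ * g σ τ := by
  rw [kext_mul_left]
  rfl

theorem kext_exitAfter_iterate (k n : ℕ) (m : St → U) :
    kext (exitAfter w w' g k) ((kext fun σ τ => w σ * g σ τ)^[n] m) =
      kext (exitAfter w w' g (k + n)) m := by
  induction n generalizing m with
  | zero => rfl
  | succ n ih =>
    rw [Function.iterate_succ_apply, ih, kext_kext]
    simp only [← exitAfter_succ]
    rfl

end Iteration

section Semantics

variable {St TI Act : Type u} (tsem : TI → Set St) (asem : Act → St → St → U)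

theorem sem_seq_assume (e : Expr U TI) (C : Prog U St TI Act) :
    sem tsem asem (.seq (.assume e) C) = fun σ τ => eeval tsem e σ * sem tsem asem C σ τ := by
  funext σ
  exact (kext_mul_left _ _ _).trans (by rw [kext_eta_apply])

theorem sem_iter (C : Prog U St TI Act) (e e' : Expr U TI) :
    sem tsem asem (.iter C e e') =
      fun σ τ =>
        wsum fun k => exitAfter (eeval tsem e) (eeval tsem e') (sem tsem asem C) k σ τ := by
  funext σ τ
  exact iSup_iterate_Phi _ _ _ σ τ

end Semantics

section Assertions

variable {St : Type u}

theorem oplus_singleton (m₁ m₂ : St → U) : oplus {m₁} {m₂} = {fun σ => m₁ σ + m₂ σ} := by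
  ext m
  simp [oplus]

theorem odotL_singleton (u : U) (m : St → U) : odotL u {m} = {fun σ => u * m σ} := by
  ext m
  simp [odotL]

theorem odotR_singleton (m : St → U) (u : U) : odotR {m} u = {fun σ => m σ * u} := by
  ext m
  simp [odotR]

theorem bigOplus_singleton {T : Type u} (f : T → St → U) :
    bigOplus (fun t => {f t}) = {fun σ => wsum fun t => f t σ} := by
  ext m
  simp [bigOplus, ← funext_iff]

end Assertions

section Completeness

variable {St TI Act : Type u} (tsem : TI → Set St) (asem : Act → St → St → U)

theorem deriv_assume_eta (e : Expr U TI) (σ : St) :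
    Deriv tsem asem {eta σ} (.assume e) {fun τ => eta σ τ * eeval tsem e σ} := by
  rw [← odotR_singleton]
  refine Deriv.assume fun m hm τ hτ => ?_
  rw [Set.mem_singleton_iff.1 hm] at hτ
  rw [eq_of_eta_ne_zero hτ]

theorem deriv_assume_singleton (e : Expr U TI) (m : St → U) :
    Deriv tsem asem {m} (.assume e) {kext (sem tsem asem (.assume e)) m} := by
  have h := Deriv.choice _ _ fun σ => Deriv.scale (m σ) (deriv_assume_eta tsem asem e σ)
  simp only [odotL_singleton, bigOplus_singleton] at h
  convert h using 2 <;> funext τ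
  · rw [← kext_eq_wsum, kext_eta]
  · simp only [kext_eq_wsum, sem, eta_mul_comm]

theorem deriv_seq_singleton {C₁ C₂ : Prog U St TI Act}
    (h₁ : ∀ m, Deriv tsem asem {m} C₁ {kext (sem tsem asem C₁) m})
    (h₂ : ∀ m, Deriv tsem asem {m} C₂ {kext (sem tsem asem C₂) m}) (m : St → U) :
    Deriv tsem asem {m} (.seq C₁ C₂) {kext (sem tsem asem (.seq C₁ C₂)) m} := by
  have h := Deriv.seq (h₁ m) (h₂ _)
  rwa [kext_kext] at h

theorem deriv_choice_singleton {C₁ C₂ : Prog U St TI Act}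
    (h₁ : ∀ m, Deriv tsem asem {m} C₁ {kext (sem tsem asem C₁) m})
    (h₂ : ∀ m, Deriv tsem asem {m} C₂ {kext (sem tsem asem C₂) m}) (m : St → U) :
    Deriv tsem asem {m} (.choice C₁ C₂) {kext (sem tsem asem (.choice C₁ C₂)) m} := by
  have h := Deriv.plus (h₁ m) (h₂ m)
  rwa [oplus_singleton, ← kext_add_kernel] at h

theorem deriv_iter_singleton {C : Prog U St TI Act} (e e' : Expr U TI)
    (hC : ∀ m, Deriv tsem asem {m} C {kext (sem tsem asem C) m}) (m : St → U) :
    Deriv tsem asem {m} (.iter C e e') {kext (sem tsem asem (.iter C e e')) m} := by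
  set body := kext (sem tsem asem (.seq (.assume e) C))
  have exit_eq (n : ℕ) : kext (sem tsem asem (.assume e')) (body^[n] m) =
      kext (exitAfter (eeval tsem e) (eeval tsem e') (sem tsem asem C) n) m := by
    have h := kext_exitAfter_iterate (eeval tsem e) (eeval tsem e') (sem tsem asem C) 0 n m
    rw [zero_add, ← sem_seq_assume] at h
    exact h
  refine Deriv.iter (fun n => {body^[n] m})
    (fun n => {kext (sem tsem asem (.assume e')) (body^[n] m)})
    _ (fun ms hms => ?_) (fun n => ?_) (fun n => deriv_assume_singleton tsem asem e' _)
  · simp only [Set.mem_singleton_iff] at hms ⊢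
    rw [sem_iter, kext_wsum_kernel]
    simp only [hms, exit_eq]
  · rw [Function.iterate_succ_apply']
    exact deriv_seq_singleton tsem asem (deriv_assume_singleton tsem asem e) hC _

theorem deriv_singleton (C : Prog U St TI Act) (m : St → U) :
    Deriv tsem asem {m} C {kext (sem tsem asem C) m} := by
  induction C generalizing m with
  | skip => simpa only [sem, kext_eta] using Deriv.skip {m}
  | seq C₁ C₂ ih₁ ih₂ => exact deriv_seq_singleton tsem asem ih₁ ih₂ m
  | choice C₁ C₂ ih₁ ih₂ => exact deriv_choice_singleton tsem asem ih₁ ih₂ m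
  | assume e => exact deriv_assume_singleton tsem asem e m
  | iter C e e' ih => exact deriv_iter_singleton tsem asem e e' ih m
  | act a => exact Deriv.atom a fun m' hm' => by rw [Set.mem_singleton_iff.1 hm']; rfl

end Completeness

/-- **Relative completeness of Outcome Logic**: every semantically valid triple is
derivable from the oracle `Ω` of valid atomic triples. -/
theorem outcome_logic_completeness {U St TI Act : Type u} [OLSemiring U]
    (tsem : TI → Set St) (asem : Act → St → St → U)
    (C : Prog U St TI Act) (φ ψ : OA U St)
    (h : valid tsem asem φ C ψ) :
    Deriv tsem asem φ C ψ := by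
  have hsingle := Deriv.exists_ (fun m : φ => {m.1})
    (fun m : φ => {kext (sem tsem asem C) m.1}) fun m => deriv_singleton tsem asem C m.1
  refine Deriv.conseq (fun m hm => Set.mem_iUnion.2 ⟨⟨m, hm⟩, rfl⟩) hsingle ?_
  exact Set.iUnion_subset fun m => Set.singleton_subset_iff.2 (h m m.2)
end

section
/- Soundness of the While rule (nondeterministic instance): let b ⊆ Σ, f : Σ → Set Σ, and let (φ_n)_{n∈ℕ}, (ψ_n)_{n∈ℕ} and ψ_∞ be outcome assertions (sets of subsets of Σ) such that (i) for every sequence (m_n)_{n∈ℕ} of subsets of Σ with m_n ∈ ψ_n for all n, one has ⋃_{n∈ℕ} m_n ∈ ψ_∞ (the family (ψ_n) converges to ψ_∞); (ii) every S ∈ φ_n satisfies S ⊆ b and every S ∈ ψ_n satisfies S ⊆ bᶜ; and (iii) for every n and S ∈ φ_n, f†(S) ∈ φ_{n+1} ⊕ ψ_{n+1}. Then for every S ∈ φ₀ ⊕ ψ₀, wh†(S) ∈ ψ_∞. -/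
open scoped Classical

/-- Kleisli extension in the powerset (nondeterministic) instance: `f†(S) = ⋃_{σ∈S} f σ`. -/
def kextP {St : Type*} (f : St → Set St) (S : Set St) : Set St :=
  ⋃ σ ∈ S, f σ

/-- `⌈P⌉` : the outcome assertion `{S | S nonempty and S ⊆ P}`. -/
def ceil {St : Type*} (P : Set St) : Set (Set St) :=
  { S | S.Nonempty ∧ S ⊆ P }

/-- `◻Q` : the outcome assertion `{S | S ⊆ Q}`. -/
def boxA {St : Type*} (Q : Set St) : Set (Set St) :=
  { S | S ⊆ Q }

/-- `◇Q` : the outcome assertion `{S | S ∩ Q nonempty}`. -/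
def diaA {St : Type*} (Q : Set St) : Set (Set St) :=
  { S | (S ∩ Q).Nonempty }

/-- Semantic validity of an outcome triple in the powerset instance. -/
def validP {St : Type*} (φ : Set (Set St)) (f : St → Set St) (ψ : Set (Set St)) : Prop :=
  ∀ S ∈ φ, kextP f S ∈ ψ
def PhiW {St : Type*} (b : Set St) (f : St → Set St) (g : St → Set St) : St → Set St :=
  fun σ => if σ ∈ b then ⋃ τ ∈ f σ, g τ else {σ}

theorem PhiW_mono {St : Type*} (b : Set St) (f : St → Set St) : Monotone (PhiW b f) := by
  intro g g' h σ
  by_cases hb : σ ∈ b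
  · simp only [PhiW, if_pos hb]
    exact Set.iUnion₂_mono fun τ _ => h τ
  · simp [PhiW, hb]

/-- The denotation of `while b do f`: the least fixed point (pointwise `⊆` order)
of `Φ(g)(σ) = ⋃_{τ∈f σ} g τ` if `σ ∈ b`, else `{σ}`. -/
noncomputable def whileSem {St : Type*} (b : Set St) (f : St → Set St) : St → Set St :=
  OrderHom.lfp ⟨PhiW b f, PhiW_mono b f⟩

/-- Binary outcome conjunction in the powerset instance: `φ ⊕ ψ = {S₁ ∪ S₂ | S₁∈φ, S₂∈ψ}`. -/
def oplusP {St : Type*} (φ ψ : Set (Set St)) : Set (Set St) :=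
  { S | ∃ S₁ ∈ φ, ∃ S₂ ∈ ψ, S = S₁ ∪ S₂ }

/-! Iterating the step hypothesis from `S = T 0 ∪ m 0` gives sets `T n ∈ φ n` of states still
inside the loop after `n` iterations and `m n ∈ ψ n` of states that have just left it, with
`f†(T n) = T (n + 1) ∪ m (n + 1)`. Since `T n ⊆ b` and `m n ⊆ bᶜ`, unfolding the loop once gives
`wh†(T n) = wh†(T (n + 1)) ∪ m (n + 1)`, so `wh†(S)` contains every `m n`. Conversely `⋃ n, T n`
is a loop invariant all of whose exits lie in `⋃ n, m n`, and least-fixed-point induction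
confines `wh†(S)` to that union. Thus `wh†(S) = ⋃ n, m n ∈ ψlim`. -/

section Kleisli

variable {St : Type*}

theorem subset_kextP {g : St → Set St} {A : Set St} {σ : St} (hσ : σ ∈ A) :
    g σ ⊆ kextP g A :=
  Set.subset_biUnion_of_mem (u := g) hσ

theorem kextP_union (g : St → Set St) (A B : Set St) :
    kextP g (A ∪ B) = kextP g A ∪ kextP g B :=
  Set.biUnion_union A B g

theorem kextP_kextP (g f : St → Set St) (A : Set St) :
    kextP g (kextP f A) = kextP (fun σ => kextP g (f σ)) A := by
  ext x
  simp only [kextP, Set.mem_iUnion, exists_prop]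
  constructor
  · rintro ⟨τ, ⟨σ, hσ, hτ⟩, hx⟩
    exact ⟨σ, hσ, τ, hτ, hx⟩
  · rintro ⟨σ, hσ, τ, hτ, hx⟩
    exact ⟨τ, ⟨σ, hσ, hτ⟩, hx⟩

end Kleisli

section While

variable {St : Type*} {b : Set St} {f : St → Set St}

theorem PhiW_whileSem (b : Set St) (f : St → Set St) : PhiW b f (whileSem b f) = whileSem b f :=
  OrderHom.map_lfp ⟨PhiW b f, PhiW_mono b f⟩

theorem whileSem_of_not_mem {σ : St} (hσ : σ ∉ b) : whileSem b f σ = {σ} := by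
  rw [← PhiW_whileSem]
  simp [PhiW, hσ]

theorem whileSem_of_mem {σ : St} (hσ : σ ∈ b) :
    whileSem b f σ = kextP (whileSem b f) (f σ) := by
  conv_lhs => rw [← PhiW_whileSem]
  simp [PhiW, hσ, kextP]

theorem kextP_whileSem_of_subset_compl {B : Set St} (hB : B ⊆ bᶜ) :
    kextP (whileSem b f) B = B := by
  simp only [kextP]
  rw [Set.iUnion₂_congr fun σ hσ => whileSem_of_not_mem (hB hσ)]
  exact Set.biUnion_of_singleton B

theorem kextP_whileSem_of_subset {A : Set St} (hA : A ⊆ b) :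
    kextP (whileSem b f) A = kextP (whileSem b f) (kextP f A) := by
  rw [kextP_kextP]
  exact Set.iUnion₂_congr fun σ hσ => whileSem_of_mem (hA hσ)

theorem whileSem_subset_of_invariant {P Q : Set St} (hP : P ⊆ b) (hQ : Q ⊆ bᶜ)
    (hf : ∀ σ ∈ P, f σ ⊆ P ∪ Q) : ∀ σ ∈ P, whileSem b f σ ⊆ Q := by
  refine OrderHom.lfp_induction (f := ⟨PhiW b f, PhiW_mono b f⟩)
    (p := fun g => ∀ σ ∈ P, g σ ⊆ Q) ?_ ?_
  · intro g hg hle σ hσ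
    show PhiW b f g σ ⊆ Q
    simp only [PhiW, if_pos (hP hσ)]
    refine Set.iUnion₂_subset fun τ hτ => ?_
    rcases hf σ hσ hτ with hτP | hτQ
    · exact hg τ hτP
    · calc g τ ⊆ whileSem b f τ := hle τ
        _ = {τ} := whileSem_of_not_mem (hQ hτQ)
        _ ⊆ Q := Set.singleton_subset_iff.mpr hτQ
  · intro s hs σ hσ
    rw [sSup_apply]
    exact iSup_le fun g => hs g g.2 σ hσ

theorem kextP_whileSem_eq_iUnion {T m : ℕ → Set St} (hT : ∀ n, T n ⊆ b)
    (hm : ∀ n, m (n + 1) ⊆ bᶜ) (hTm : ∀ n, kextP f (T n) = T (n + 1) ∪ m (n + 1)) :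
    kextP (whileSem b f) (T 0) = ⋃ n, m (n + 1) := by
  have unfold : ∀ n, kextP (whileSem b f) (T n) =
      kextP (whileSem b f) (T (n + 1)) ∪ m (n + 1) := fun n => by
    rw [kextP_whileSem_of_subset (hT n), hTm, kextP_union,
      kextP_whileSem_of_subset_compl (hm n)]
  have anti : Antitone fun n => kextP (whileSem b f) (T n) :=
    antitone_nat_of_succ_le fun n => (unfold n).symm ▸ Set.subset_union_left
  refine (Set.iUnion₂_subset fun σ hσ => ?_).antisymm (Set.iUnion_subset fun n => ?_)
  · refine whileSem_subset_of_invariant (Set.iUnion_subset hT)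
      (Set.iUnion_subset hm) ?_ σ (Set.mem_iUnion_of_mem 0 hσ)
    intro τ hτ
    obtain ⟨n, hτ⟩ := Set.mem_iUnion.mp hτ
    calc f τ ⊆ T (n + 1) ∪ m (n + 1) := hTm n ▸ subset_kextP hτ
      _ ⊆ (⋃ n, T n) ∪ ⋃ n, m (n + 1) :=
        Set.union_subset_union (Set.subset_iUnion T _) (Set.subset_iUnion (fun n => m (n + 1)) n)
  · calc m (n + 1) ⊆ kextP (whileSem b f) (T n) := (unfold n).symm ▸ Set.subset_union_right
      _ ⊆ kextP (whileSem b f) (T 0) := anti (Nat.zero_le n)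

end While

theorem exists_run_of_step {St : Type*} {f : St → Set St} {φ ψ : ℕ → Set (Set St)}
    (hstep : ∀ n, ∀ S ∈ φ n, kextP f S ∈ oplusP (φ (n + 1)) (ψ (n + 1)))
    {S₁ S₂ : Set St} (hS₁ : S₁ ∈ φ 0) (hS₂ : S₂ ∈ ψ 0) :
    ∃ T m : ℕ → Set St, T 0 = S₁ ∧ m 0 = S₂ ∧ (∀ n, T n ∈ φ n) ∧ (∀ n, m n ∈ ψ n) ∧
      ∀ n, kextP f (T n) = T (n + 1) ∪ m (n + 1) := by
  choose next hnext exit hexit hsplit using hstep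
  let run : ∀ n, {S // S ∈ φ n} :=
    fun n => Nat.rec ⟨S₁, hS₁⟩ (fun k T => ⟨next k T T.2, hnext k T T.2⟩) n
  refine ⟨fun n => (run n).1, fun n => Nat.casesOn n S₂ fun k => exit k (run k).1 (run k).2,
    rfl, rfl, fun n => (run n).2, fun n => ?_, fun n => hsplit n _ (run n).2⟩
  cases n with
  | zero => exact hS₂
  | succ k => exact hexit k _ (run k).2

/-- **Soundness of the While rule (nondeterministic instance)**: if `(ψ n)` converges to
`ψlim`, each `S ∈ φ n` satisfies `S ⊆ b`, each `S ∈ ψ n` satisfies `S ⊆ bᶜ`, and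
`f†(S) ∈ φ (n+1) ⊕ ψ (n+1)` for every `S ∈ φ n`, then
`wh†(S) ∈ ψlim` for every `S ∈ φ 0 ⊕ ψ 0`. -/
theorem while_rule_sound {St : Type*} (b : Set St) (f : St → Set St)
    (φ ψ : ℕ → Set (Set St)) (ψlim : Set (Set St))
    (hconv : ∀ ms : ℕ → Set St, (∀ n, ms n ∈ ψ n) → (⋃ n, ms n) ∈ ψlim)
    (hφ : ∀ n, ∀ S ∈ φ n, S ⊆ b)
    (hψ : ∀ n, ∀ S ∈ ψ n, S ⊆ bᶜ)
    (hstep : ∀ n, ∀ S ∈ φ n, kextP f S ∈ oplusP (φ (n + 1)) (ψ (n + 1))) :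
    ∀ S ∈ oplusP (φ 0) (ψ 0), kextP (whileSem b f) S ∈ ψlim := by
  rintro _ ⟨S₁, hS₁, S₂, hS₂, rfl⟩
  obtain ⟨T, m, rfl, rfl, hT, hm, hTm⟩ := exists_run_of_step hstep hS₁ hS₂
  have hmb : ∀ n, m n ⊆ bᶜ := fun n => hψ n _ (hm n)
  rw [kextP_union, kextP_whileSem_eq_iUnion (fun n => hφ n _ (hT n)) (fun n => hmb (n + 1)) hTm,
    kextP_whileSem_of_subset_compl (hmb 0), Set.union_comm, Set.union_iUnion_nat_succ]
  exact hconv m hm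
end
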